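/- arXiv:2304.09449 — 2 statements merged into one kernel-verified Lean document; each statement's English description precedes it below -/
import Mathlib

section
/- Let D ≥ 4 and k > D/2 be integers, x ≥ 0, and let g : [0,∞) × [0,∞) → ℝ be continuously differentiable in r with |∂g/∂r (u,s)| ≤ (8π x²/(D-2)²) · (1+u)^(-(2k-D)) · (1+s+u)^(-(D-1)) for all s > 0. Define ḡ(u,r) = (1/r) ∫₀^r g(u,s) ds. Then |g(u,r) - ḡ(u,r)| ≤ (8π x²/((D-3)(D-2)²)) · (1+u)^(-(2k-3)) · (1+r+u)^(-1) for all u ≥ 0 and r > 0, provided D > 3. -/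
/-!
Integrating the derivative bound from `s` to `r` gives the tail estimate
`|g(u,r) - g(u,s)| ≲ (1+s+u)^{-(D-2)}` for `0 < s ≤ r`; comparing `g(u,·)` with the
explicit antiderivative of the majorant (a fencing argument) avoids any integrability
assumption on `∂g/∂r`. Averaging over `s ∈ (0, r]` gives
`((1+u)^{-(D-3)} - (1+r+u)^{-(D-3)}) / ((D-3) r)`, and Bernoulli's inequality applied to
`((1+u)/(1+r+u))^{D-3}` trades the factor `1/r` for `1/(1+r+u)`.
-/

open MeasureTheory Real Set

lemma hasDerivAt_neg_rpow_neg_div {a q t : ℝ} (hq : q ≠ 0) (ht : 0 < a + t) :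
    HasDerivAt (fun t => -((a + t) ^ (-q) / q)) ((a + t) ^ (-(q + 1))) t := by
  refine ((((hasDerivAt_id t).const_add a).rpow_const (p := -q) (Or.inl ht.ne')).div_const q).neg
    |>.congr_deriv ?_
  rw [id, show -q - 1 = -(q + 1) by ring]
  field_simp

lemma abs_sub_le_of_abs_deriv_le_rpow_neg {f f' : ℝ → ℝ} {a q C s r : ℝ} (hq : 0 < q)
    (has : 0 < a + s) (hsr : s ≤ r) (hf : ∀ t ∈ Icc s r, HasDerivAt f (f' t) t)
    (hf' : ∀ t ∈ Icc s r, |f' t| ≤ C * (a + t) ^ (-(q + 1))) :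
    |f r - f s| ≤ C / q * (a + s) ^ (-q) := by
  have hpos : ∀ t ∈ Icc s r, 0 < a + t := fun t ht => by linarith [ht.1]
  have hC : 0 ≤ C := nonneg_of_mul_nonneg_left ((abs_nonneg _).trans (hf' s ⟨le_rfl, hsr⟩))
    (rpow_pos_of_pos has _)
  have hB : ∀ t ∈ Icc s r, HasDerivAt (fun t => C / q * (a + s) ^ (-q) + C * -((a + t) ^ (-q) / q))
      (C * (a + t) ^ (-(q + 1))) t := fun t ht =>
    ((hasDerivAt_neg_rpow_neg_div hq.ne' (hpos t ht)).const_mul C).const_add _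
  have fence := image_norm_le_of_norm_deriv_right_le_deriv_boundary' (f := fun t => f t - f s)
    (fun t ht => ((hf t ht).continuousAt.sub continuousAt_const).continuousWithinAt)
    (fun t ht => ((hf t (Ico_subset_Icc_self ht)).sub_const (f s)).hasDerivWithinAt)
    (by rw [sub_self, norm_zero]; exact le_of_eq (by ring))
    (fun t ht => (hB t ht).continuousAt.continuousWithinAt)
    (fun t ht => (hB t (Ico_subset_Icc_self ht)).hasDerivWithinAt)
    (fun t ht => hf' t (Ico_subset_Icc_self ht)) ⟨hsr, le_rfl⟩
  have hBr : 0 ≤ C * ((a + r) ^ (-q) / q) := by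
    have := rpow_nonneg (hpos r ⟨hsr, le_rfl⟩).le (-q)
    positivity
  rw [Real.norm_eq_abs] at fence
  linarith

lemma abs_sub_intervalAverage_le {f φ : ℝ → ℝ} {a b : ℝ} (hab : a < b)
    (hf : AEStronglyMeasurable f (volume.restrict (Ioc a b)))
    (hφ : IntervalIntegrable φ volume a b) (h : ∀ s ∈ Ioc a b, |f b - f s| ≤ φ s) :
    |f b - (b - a)⁻¹ * ∫ s in a..b, f s| ≤ (b - a)⁻¹ * ∫ s in a..b, φ s := by
  have hba : 0 < b - a := sub_pos.mpr hab
  have hdiff : IntervalIntegrable (fun s => f b - f s) volume a b := by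
    rw [intervalIntegrable_iff_integrableOn_Ioc_of_le hab.le]
    refine hφ.1.mono' (aestronglyMeasurable_const.sub hf) ?_
    filter_upwards [ae_restrict_mem measurableSet_Ioc] with s hs using h s hs
  have hfint : IntervalIntegrable f volume a b := by
    simpa using (intervalIntegrable_const (c := f b)).sub hdiff
  have hmean : f b - (b - a)⁻¹ * ∫ s in a..b, f s = (b - a)⁻¹ * ∫ s in a..b, (f b - f s) := by
    rw [intervalIntegral.integral_sub intervalIntegrable_const hfint,
      intervalIntegral.integral_const, smul_eq_mul]
    field_simp
  rw [hmean, abs_mul, abs_of_pos (inv_pos.mpr hba)]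
  gcongr
  calc |∫ s in a..b, (f b - f s)| ≤ ∫ s in a..b, |f b - f s| :=
        intervalIntegral.abs_integral_le_integral_abs hab.le
    _ ≤ ∫ s in a..b, φ s := intervalIntegral.integral_mono_on_of_le_Ioo hab.le hdiff.abs hφ
        fun s hs => h s (Ioo_subset_Ioc_self hs)

lemma integral_add_rpow_neg {a m r : ℝ} (ha : 0 < a) (hm : 0 < m) (hr : 0 ≤ r) :
    ∫ s in (0 : ℝ)..r, (a + s) ^ (-(m + 1)) = (a ^ (-m) - (a + r) ^ (-m)) / m := by
  have h0 : (0 : ℝ) ∉ uIcc a (a + r) := by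
    rw [uIcc_of_le (by linarith)]
    exact fun h => ha.not_ge h.1
  rw [intervalIntegral.integral_comp_add_left (fun s => s ^ (-(m + 1))), add_zero,
    integral_rpow (Or.inr ⟨by linarith, h0⟩), show -(m + 1) + 1 = -m by ring]
  field_simp
  ring

lemma rpow_neg_sub_rpow_neg_le {a r m : ℝ} (ha : 0 < a) (hr : 0 ≤ r) (hm : 1 ≤ m) :
    a ^ (-m) - (a + r) ^ (-m) ≤ m * r * a ^ (-m) / (a + r) := by
  have har : 0 < a + r := by linarith
  have bernoulli : 1 - m * r / (a + r) ≤ (a / (a + r)) ^ m := by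
    have := one_add_mul_self_le_rpow_one_add (s := a / (a + r) - 1)
      (by linarith [div_pos ha har]) hm
    convert this using 2
    · field_simp
      ring
    · ring
  have hsplit : (a + r) ^ (-m) = a ^ (-m) * (a / (a + r)) ^ m := by
    rw [div_rpow ha.le har.le, rpow_neg ha.le, rpow_neg har.le]
    field_simp
  have := rpow_pos_of_pos ha (-m)
  calc a ^ (-m) - (a + r) ^ (-m) = a ^ (-m) * (1 - (a / (a + r)) ^ m) := by rw [hsplit]; ring
    _ ≤ a ^ (-m) * (m * r / (a + r)) := by gcongr; linarith
    _ = m * r * a ^ (-m) / (a + r) := by ring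

lemma average_add_rpow_neg_le {a m r : ℝ} (ha : 0 < a) (hm : 1 ≤ m) (hr : 0 < r) :
    r⁻¹ * ∫ s in (0 : ℝ)..r, (a + s) ^ (-(m + 1)) ≤ (a + r)⁻¹ * a ^ (-m) := by
  rw [integral_add_rpow_neg ha (by linarith) hr.le]
  calc r⁻¹ * ((a ^ (-m) - (a + r) ^ (-m)) / m) ≤ r⁻¹ * (m * r * a ^ (-m) / (a + r) / m) := by
        gcongr
        exact rpow_neg_sub_rpow_neg_le ha hr.le hm
    _ = (a + r)⁻¹ * a ^ (-m) := by field_simp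

lemma abs_sub_average_le_of_abs_deriv_le_rpow_neg {f f' : ℝ → ℝ} {a m C r : ℝ} (ha : 0 < a)
    (hm : 1 ≤ m) (hr : 0 < r) (hf : ∀ t ∈ Ioc 0 r, HasDerivAt f (f' t) t)
    (hf' : ∀ t ∈ Ioc 0 r, |f' t| ≤ C * (a + t) ^ (-(m + 2))) :
    |f r - r⁻¹ * ∫ s in (0 : ℝ)..r, f s| ≤ C / (m + 1) * ((a + r)⁻¹ * a ^ (-m)) := by
  have hC : 0 ≤ C := nonneg_of_mul_nonneg_left ((abs_nonneg _).trans (hf' r ⟨hr, le_rfl⟩))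
    (rpow_pos_of_pos (by linarith) _)
  have tail : ∀ s ∈ Ioc 0 r, |f r - f s| ≤ C / (m + 1) * (a + s) ^ (-(m + 1)) :=
    fun s hs => abs_sub_le_of_abs_deriv_le_rpow_neg (by linarith) (by linarith [hs.1]) hs.2
      (fun t ht => hf t ⟨hs.1.trans_le ht.1, ht.2⟩)
      (fun t ht => by rw [add_assoc, one_add_one_eq_two]; exact hf' t ⟨hs.1.trans_le ht.1, ht.2⟩)
  have hmajorant : IntervalIntegrable (fun s => C / (m + 1) * (a + s) ^ (-(m + 1))) volume 0 r := by
    refine ContinuousOn.intervalIntegrable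
      (continuousOn_const.mul ((by fun_prop : Continuous (a + ·)).continuousOn.rpow_const ?_))
    rw [uIcc_of_le hr.le]
    exact fun s hs => Or.inl (by linarith [hs.1])
  have average := abs_sub_intervalAverage_le hr
    (ContinuousOn.aestronglyMeasurable (fun t ht => (hf t ht).continuousAt.continuousWithinAt)
      measurableSet_Ioc) hmajorant tail
  rw [sub_zero, intervalIntegral.integral_const_mul, mul_left_comm] at average
  exact average.trans (mul_le_mul_of_nonneg_left (average_add_rpow_neg_le ha hm hr)
    (div_nonneg hC (by linarith)))

theorem stmt_2_general (D k : ℕ) (hD : 4 ≤ D)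
    (x : ℝ) (g g' : ℝ → ℝ → ℝ)
    (hderiv : ∀ u s : ℝ, 0 < s → HasDerivAt (fun t => g u t) (g' u s) s)
    (hbound : ∀ u s : ℝ, 0 ≤ u → 0 < s →
      |g' u s| ≤ (8 * π * x ^ 2 / ((D : ℝ) - 2) ^ 2) * (1 + u) ^ (-(2 * (k : ℝ) - D)) *
        (1 + s + u) ^ (-((D : ℝ) - 1)))
    (u r : ℝ) (hu : 0 ≤ u) (hr : 0 < r) :
    |g u r - (1 / r) * ∫ s in (0 : ℝ)..r, g u s| ≤
      (8 * π * x ^ 2 / (((D : ℝ) - 3) * ((D : ℝ) - 2) ^ 2)) *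
        (1 + u) ^ (-(2 * (k : ℝ) - 3)) * (1 + r + u) ^ (-(1 : ℝ)) := by
  have hD4 : (4 : ℝ) ≤ D := by exact_mod_cast hD
  have key := abs_sub_average_le_of_abs_deriv_le_rpow_neg (f := g u) (a := 1 + u)
    (m := (D : ℝ) - 3) (by linarith) (by linarith) hr (fun t ht => hderiv u t ht.1)
    (fun t ht => by convert hbound u t hu ht.1 using 3 <;> ring)
  have hpow : (1 + u) ^ (-(2 * (k : ℝ) - D)) * (1 + u) ^ (-((D : ℝ) - 3)) =
      (1 + u) ^ (-(2 * (k : ℝ) - 3)) := by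
    rw [← rpow_add (by linarith)]
    ring_nf
  rw [one_div, rpow_neg_one, add_right_comm 1 r u]
  calc _ ≤ _ := key
    _ = 8 * π * x ^ 2 / ((D : ℝ) - 2) ^ 2 * (1 + u) ^ (-(2 * (k : ℝ) - 3)) * (1 + u + r)⁻¹
          / ((D : ℝ) - 3 + 1) := by rw [← hpow]; ring
    _ ≤ 8 * π * x ^ 2 / ((D : ℝ) - 2) ^ 2 * (1 + u) ^ (-(2 * (k : ℝ) - 3)) * (1 + u + r)⁻¹
          / ((D : ℝ) - 3) := by gcongr <;> linarith
    _ = _ := by field_simp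

/-- Estimate for the difference between g and its radial mean ḡ. -/
theorem stmt_2 (D k : ℕ) (hD : 4 ≤ D) (hD3 : 3 < D) (hk : (D : ℝ) / 2 < k)
    (x : ℝ) (hx : 0 ≤ x) (g g' : ℝ → ℝ → ℝ)
    (hderiv : ∀ u s : ℝ, 0 < s → HasDerivAt (fun t => g u t) (g' u s) s)
    (hbound : ∀ u s : ℝ, 0 ≤ u → 0 < s →
      |g' u s| ≤ (8 * π * x ^ 2 / ((D : ℝ) - 2) ^ 2) * (1 + u) ^ (-(2 * (k : ℝ) - D)) *
        (1 + s + u) ^ (-((D : ℝ) - 1)))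
    (u r : ℝ) (hu : 0 ≤ u) (hr : 0 < r) :
    |g u r - (1 / r) * ∫ s in (0 : ℝ)..r, g u s| ≤
      (8 * π * x ^ 2 / (((D : ℝ) - 3) * ((D : ℝ) - 2) ^ 2)) *
        (1 + u) ^ (-(2 * (k : ℝ) - 3)) * (1 + r + u) ^ (-(1 : ℝ)) :=
  stmt_2_general D k hD x g g' hderiv hbound u r hu hr
end

section
/- Let D ≥ 4, let R̂ > 0 be constant, and let g, g̃, V, w be as follows: g, g̃ > 0 with g̃ ≤ g, ∂g/∂r = (8π g/((D-2) r)) w², ∂g̃/∂r = [R̂/((D-2) r) + ((D-5)/r)(g̃/g) + (16π r/(D-2)) V] g, where V ≤ 0. Define M = (r^(D-3)/2)(R̂/(D-2) + (D-5) g̃/g). Then ∂M/∂r = (D-4) r^(D-4) R̂/(D-2) + (D-5) r^(D-4) (g̃/g) [ (D-4) - (4π/(D-2)) w² + (8π r² V/(D-2))(g/g̃) ]. In particular, for D = 5, ∂M/∂r = (R̂/3) r ≥ 0; and for D = 4, ∂M/∂r = 2π (g̃/g) w² - 4π r² V ≥ 0. -/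
/-!
Product and quotient rule applied to `M`, after which the constraint equations replace `g'` and
`g̃'`. For `D = 5` the factor `D - 5` kills the `g̃/g` term, and for `D = 4` the factor `D - 4` kills
the `R̂` term, leaving `2π (g̃/g) w² - 4π r² V`, which is nonnegative because `V ≤ 0`.
-/

open Real

/-- The paper's formula for `∂M/∂r`, with `d = D`, `gt = g̃`, and `g`, `gt`, `w`, `V` evaluated at `r`. -/
noncomputable def massDerivative (d R r g gt w V : ℝ) : ℝ :=
  (d - 4) * r ^ (d - 4) * R / (d - 2) +
    (d - 5) * r ^ (d - 4) * (gt / g) *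
      ((d - 4) - (4 * π / (d - 2)) * w ^ 2 + (8 * π * r ^ 2 * V / (d - 2)) * (g / gt))

theorem hasDerivAt_mass {d R r : ℝ} {g gt : ℝ → ℝ} {w V : ℝ} (hd : d ≠ 2) (hr : 0 < r)
    (hg : g r ≠ 0) (hgt : gt r ≠ 0)
    (hgd : HasDerivAt g ((8 * π * g r / ((d - 2) * r)) * w ^ 2) r)
    (hgtd : HasDerivAt gt
      ((R / ((d - 2) * r) + ((d - 5) / r) * (gt r / g r) + (16 * π * r / (d - 2)) * V) * g r) r) :
    HasDerivAt (fun x => x ^ (d - 3) / 2 * (R / (d - 2) + (d - 5) * gt x / g x))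
      (massDerivative d R r (g r) (gt r) w V) r := by
  have hpow : HasDerivAt (fun x : ℝ => x ^ (d - 3)) ((d - 3) * r ^ (d - 4)) r := by
    simpa only [show d - 3 - 1 = d - 4 by ring] using
      hasDerivAt_rpow_const (p := d - 3) (Or.inl hr.ne')
  have hratio := ((hgtd.const_mul (d - 5)).div hgd hg).const_add (R / (d - 2))
  refine ((hpow.div_const 2).mul hratio).congr_deriv ?_
  have hd2 : d - 2 ≠ 0 := sub_ne_zero.mpr hd
  simp only [massDerivative, Pi.div_apply]
  rw [show d - 3 = d - 4 + 1 by ring, rpow_add hr, rpow_one]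
  field_simp
  ring

theorem massDerivative_five (R r g gt w V : ℝ) : massDerivative 5 R r g gt w V = R / 3 * r := by
  norm_num [massDerivative]
  ring

theorem massDerivative_four {R r g gt w V : ℝ} (hg : g ≠ 0) (hgt : gt ≠ 0) :
    massDerivative 4 R r g gt w V = 2 * π * (gt / g) * w ^ 2 - 4 * π * r ^ 2 * V := by
  norm_num [massDerivative]
  field_simp
  ring

theorem stmt_12_general (D : ℕ) (hD : 4 ≤ D) (R : ℝ) (hR : 0 < R)
    (g gt w V : ℝ → ℝ)
    (hg : ∀ r > (0 : ℝ), 0 < g r) (hgt : ∀ r > (0 : ℝ), 0 < gt r)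
    (hV : ∀ r > (0 : ℝ), V r ≤ 0)
    (hgd : ∀ r > (0 : ℝ), HasDerivAt g ((8 * π * g r / (((D : ℝ) - 2) * r)) * w r ^ 2) r)
    (hgtd : ∀ r > (0 : ℝ), HasDerivAt gt
      ((R / (((D : ℝ) - 2) * r) + (((D : ℝ) - 5) / r) * (gt r / g r) +
        (16 * π * r / ((D : ℝ) - 2)) * V r) * g r) r)
    (M : ℝ → ℝ)
    (hM : ∀ r : ℝ, M r = (r ^ ((D : ℝ) - 3) / 2) * (R / ((D : ℝ) - 2) + ((D : ℝ) - 5) * gt r / g r)) :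
    ∀ r > (0 : ℝ),
      HasDerivAt M
        (((D : ℝ) - 4) * r ^ ((D : ℝ) - 4) * R / ((D : ℝ) - 2) +
          ((D : ℝ) - 5) * r ^ ((D : ℝ) - 4) * (gt r / g r) *
            (((D : ℝ) - 4) - (4 * π / ((D : ℝ) - 2)) * w r ^ 2 +
              (8 * π * r ^ 2 * V r / ((D : ℝ) - 2)) * (g r / gt r))) r ∧
      (D = 5 →
        ((D : ℝ) - 4) * r ^ ((D : ℝ) - 4) * R / ((D : ℝ) - 2) +
          ((D : ℝ) - 5) * r ^ ((D : ℝ) - 4) * (gt r / g r) *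
            (((D : ℝ) - 4) - (4 * π / ((D : ℝ) - 2)) * w r ^ 2 +
              (8 * π * r ^ 2 * V r / ((D : ℝ) - 2)) * (g r / gt r)) = (R / 3) * r ∧
        0 ≤ (R / 3) * r) ∧
      (D = 4 →
        ((D : ℝ) - 4) * r ^ ((D : ℝ) - 4) * R / ((D : ℝ) - 2) +
          ((D : ℝ) - 5) * r ^ ((D : ℝ) - 4) * (gt r / g r) *
            (((D : ℝ) - 4) - (4 * π / ((D : ℝ) - 2)) * w r ^ 2 +
              (8 * π * r ^ 2 * V r / ((D : ℝ) - 2)) * (g r / gt r)) =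
          2 * π * (gt r / g r) * w r ^ 2 - 4 * π * r ^ 2 * V r ∧
        0 ≤ 2 * π * (gt r / g r) * w r ^ 2 - 4 * π * r ^ 2 * V r) := by
  intro r hr
  have hD2 : (D : ℝ) ≠ 2 := by
    have : (4 : ℝ) ≤ D := by exact_mod_cast hD
    linarith
  refine ⟨?_, fun h5 => ?_, fun h4 => ?_⟩
  · rw [show M = _ from funext hM]
    exact hasDerivAt_mass hD2 hr (hg r hr).ne' (hgt r hr).ne' (hgd r hr) (hgtd r hr)
  · rw [show (D : ℝ) = 5 by exact_mod_cast h5]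
    exact ⟨massDerivative_five .., by positivity⟩
  · rw [show (D : ℝ) = 4 by exact_mod_cast h4]
    have hratio : 0 ≤ gt r / g r := (div_pos (hgt r hr) (hg r hr)).le
    have hVr : r ^ 2 * V r ≤ 0 := mul_nonpos_of_nonneg_of_nonpos (sq_nonneg r) (hV r hr)
    refine ⟨massDerivative_four (hg r hr).ne' (hgt r hr).ne', ?_⟩
    nlinarith [pi_pos, mul_nonneg hratio (sq_nonneg (w r))]

/-- Differentiation identity for the mass-like function M, and the cases D = 4, 5. -/
theorem stmt_12 (D : ℕ) (hD : 4 ≤ D) (R : ℝ) (hR : 0 < R)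
    (g gt w V : ℝ → ℝ)
    (hg : ∀ r > (0 : ℝ), 0 < g r) (hgt : ∀ r > (0 : ℝ), 0 < gt r)
    (hle : ∀ r > (0 : ℝ), gt r ≤ g r) (hV : ∀ r > (0 : ℝ), V r ≤ 0)
    (hgd : ∀ r > (0 : ℝ), HasDerivAt g ((8 * π * g r / (((D : ℝ) - 2) * r)) * w r ^ 2) r)
    (hgtd : ∀ r > (0 : ℝ), HasDerivAt gt
      ((R / (((D : ℝ) - 2) * r) + (((D : ℝ) - 5) / r) * (gt r / g r) +
        (16 * π * r / ((D : ℝ) - 2)) * V r) * g r) r)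
    (M : ℝ → ℝ)
    (hM : ∀ r : ℝ, M r = (r ^ ((D : ℝ) - 3) / 2) * (R / ((D : ℝ) - 2) + ((D : ℝ) - 5) * gt r / g r)) :
    ∀ r > (0 : ℝ),
      HasDerivAt M
        (((D : ℝ) - 4) * r ^ ((D : ℝ) - 4) * R / ((D : ℝ) - 2) +
          ((D : ℝ) - 5) * r ^ ((D : ℝ) - 4) * (gt r / g r) *
            (((D : ℝ) - 4) - (4 * π / ((D : ℝ) - 2)) * w r ^ 2 +
              (8 * π * r ^ 2 * V r / ((D : ℝ) - 2)) * (g r / gt r))) r ∧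
      (D = 5 →
        ((D : ℝ) - 4) * r ^ ((D : ℝ) - 4) * R / ((D : ℝ) - 2) +
          ((D : ℝ) - 5) * r ^ ((D : ℝ) - 4) * (gt r / g r) *
            (((D : ℝ) - 4) - (4 * π / ((D : ℝ) - 2)) * w r ^ 2 +
              (8 * π * r ^ 2 * V r / ((D : ℝ) - 2)) * (g r / gt r)) = (R / 3) * r ∧
        0 ≤ (R / 3) * r) ∧
      (D = 4 →
        ((D : ℝ) - 4) * r ^ ((D : ℝ) - 4) * R / ((D : ℝ) - 2) +
          ((D : ℝ) - 5) * r ^ ((D : ℝ) - 4) * (gt r / g r) *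
            (((D : ℝ) - 4) - (4 * π / ((D : ℝ) - 2)) * w r ^ 2 +
              (8 * π * r ^ 2 * V r / ((D : ℝ) - 2)) * (g r / gt r)) =
          2 * π * (gt r / g r) * w r ^ 2 - 4 * π * r ^ 2 * V r ∧
        0 ≤ 2 * π * (gt r / g r) * w r ^ 2 - 4 * π * r ^ 2 * V r) :=
  stmt_12_general D hD R hR g gt w V hg hgt hV hgd hgtd M hM
end
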